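/- Fix γ ∈ (0,1) and μ > 0 with μ ≠ 1, and set k := ⌊1/μ⌋ and γ_c(μ) := (k/(k+1))·(1 − μ/(2 − kμ)). Let g be the concave traveling wave with speed v and support [L,0], and let A(x) and A⁺(x) denote respectively the smallest and the largest maximizer over y ∈ ℝ of y ↦ g(y) − |x + v − y|. Then A and A⁺ are non-decreasing functions on [L,0]. Moreover, for every x ∈ [L,0]: if γ ≤ γ_c(μ), then there exists J ∈ ℕ such that the j-fold iterates satisfy A^j(x) = (A⁺)^j(x) = 0 for all j ≥ J; and if γ > γ_c(μ), then there exists a constant c₁ > 0 such that for all sufficiently large j, A^j(x) = −c₁ and (A⁺)^j(x) = 0. -/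

import Mathlib

/-- `π(x) = x` if `x ≥ 0`, and `−∞` otherwise. -/
noncomputable def piE (x : EReal) : EReal := if 0 ≤ x then x else ⊥

/-- Concavity for `ℝ ∪ {−∞}`-valued functions (modeled as `ℝ → EReal`). -/
def ConcaveE (h : ℝ → EReal) : Prop :=
  ∀ x x' t : ℝ, 0 ≤ t → t ≤ 1 →
    ((t : EReal) * h x + ((1 - t : ℝ) : EReal) * h x') ≤ h (t * x + (1 - t) * x')

/-- `Φ_ξ[g](x) = 1 − γ + sup_y ( g(y) − |x − y| ) − μ·max(ξ − x, 0)`. -/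
noncomputable def Phi (γ μ : ℝ) (g : ℝ → EReal) (ξ x : ℝ) : EReal :=
  ((1 - γ : ℝ) : EReal) + (⨆ y : ℝ, g y - ((|x - y| : ℝ) : EReal))
    - ((μ * max (ξ - x) 0 : ℝ) : EReal)

/-- The phenotypic threshold `s = sup{ ξ ∈ ℝ : sup_x Φ_ξ[g](x) ≥ γ }`. -/
noncomputable def sNext (γ μ : ℝ) (g : ℝ → EReal) : ℝ :=
  sSup {ξ : ℝ | (γ : EReal) ≤ ⨆ x : ℝ, Phi γ μ g ξ x}

/-- The deterministic dynamic: `g_n = π ∘ Φ_{s_n}[g_{n−1}]` with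
`s_n = sNext γ μ g_{n−1}`. -/
noncomputable def gIter (γ μ : ℝ) (g0 : ℝ → EReal) : ℕ → ℝ → EReal
  | 0 => g0
  | n + 1 => fun x =>
      piE (Phi γ μ (gIter γ μ g0 n) (sNext γ μ (gIter γ μ g0 n)) x)

/-- A concave `g` with `sup{x : g x > 0} = 0`, `L = inf{x : g x > 0} > −∞`
(and `g = −∞` outside `[L,0]`) is a traveling wave with speed `v` if the
dynamic has the effect of shifting `g` by `v` at every step. -/
def IsTravelingWave (γ μ : ℝ) (g : ℝ → EReal) (v L : ℝ) : Prop :=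
  ConcaveE g ∧
  {x : ℝ | 0 < g x}.Nonempty ∧
  BddBelow {x : ℝ | 0 < g x} ∧
  sSup {x : ℝ | 0 < g x} = 0 ∧
  sInf {x : ℝ | 0 < g x} = L ∧
  (∀ x : ℝ, x ∉ Set.Icc L 0 → g x = ⊥) ∧
  (∀ n : ℕ, 1 ≤ n → ∀ x : ℝ, gIter γ μ g n x = g (x - n * v))

/-- `k = ⌊1/μ⌋`. -/
noncomputable def kFl (μ : ℝ) : ℤ := ⌊1 / μ⌋

/-- The critical selection strength `γ_c(μ) = (k/(k+1))·(1 − μ/(2 − kμ))`. -/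
noncomputable def gammaC (μ : ℝ) : ℝ :=
  ((kFl μ : ℝ) / ((kFl μ : ℝ) + 1)) * (1 - μ / (2 - (kFl μ : ℝ) * μ))

/-!
Write `h x = ⨆ y, g y - |x - y|` and `φ x = 1 - γ + h x - μ (s - x)⁺` for the threshold `s`.
The wave equation says `g y = π (φ (y + v))`, and `h` is finite and 1-Lipschitz, so `φ` is
continuous: this pins down `φ v = 0`, whence `g 0 = 0`, `g y ≤ -y` and `h w = -w` for `w ≥ 0`;
moreover `max φ = γ` and `v > 0`.

Put `q j = jumpGain μ j = j (2 - (j + 1) μ) / 2`, maximal over the integers at `k = ⌊1/μ⌋`, so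
that `γ_c = q k / (1 + q k)`. If `v ≤ s`, following `φ` from its maximiser to the right in jumps of
length `v` gives `γ ≤ v · q n ≤ (1 - γ) q k`, i.e. `γ ≤ γ_c`. If `s < v`, then `v = 1 - γ`, `g`
equals `-y` on `[s - v, 0]`, and following `φ` to the left from `s` gives
`γ ≥ (v - s) + v q k > (1 - γ) q k`, i.e. `γ > γ_c`.

In both cases `g y = -y` on `[p, 0]` with `p = min (s - v) 0`, and `y ↦ g y + y` is strictly
increasing on `[L, p]`. Hence the maximisers of `g y - |x + v - y|` fill `[p, min (x + v) 0]` when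
`x + v > p` and lie in `[x + v, 0]` otherwise: the iterates of `A` move right by `v` until they land
on `p`, those of `A⁺` until they reach `0`. Monotonicity of `A` and `A⁺` comes from the quadrangle
inequality for `|d - y|`.
-/

open Set

lemma piE_coe_of_nonneg {r : ℝ} (hr : 0 ≤ r) : piE (r : EReal) = r :=
  if_pos (EReal.coe_nonneg.2 hr)

lemma piE_coe_of_neg {r : ℝ} (hr : r < 0) : piE (r : EReal) = ⊥ :=
  if_neg (by exact_mod_cast hr.not_ge)

lemma piE_le (x : EReal) : piE x ≤ x := by
  unfold piE
  split_ifs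
  exacts [le_rfl, bot_le]

lemma Phi_comp_sub (γ μ : ℝ) (g : ℝ → EReal) (v ξ x : ℝ) :
    Phi γ μ (fun y => g (y - v)) ξ x = Phi γ μ g (ξ - v) (x - v) := by
  have hsup : (⨆ y, g (y - v) - ((|x - y| : ℝ) : EReal)) =
      ⨆ y, g y - ((|x - v - y| : ℝ) : EReal) := by
    refine (iSup_congr fun y => ?_).trans ((Equiv.subRight v).iSup_comp
      (g := fun z => g z - ((|x - v - z| : ℝ) : EReal)))
    simp [sub_sub_sub_cancel_right]
  rw [Phi, Phi, hsup, sub_sub_sub_cancel_right]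

lemma setOf_le_iSup_Phi_comp_sub (γ μ : ℝ) (g : ℝ → EReal) (v : ℝ) :
    {ξ : ℝ | (γ : EReal) ≤ ⨆ x, Phi γ μ (fun y => g (y - v)) ξ x} =
      (· - v) ⁻¹' {ξ : ℝ | (γ : EReal) ≤ ⨆ x, Phi γ μ g ξ x} := by
  ext ξ
  simp only [mem_ofPred_eq, mem_preimage, Phi_comp_sub]
  exact iff_of_eq (congrArg _ ((Equiv.subRight v).iSup_comp (g := Phi γ μ g (ξ - v))))

/-- `jumpGain μ j = ∑_{i=1}^{j} (1 - i μ)`: the `i`-th jump of length `v` of the profile gains `v`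
and pays the penalty `μ i v`. -/
noncomputable def jumpGain (μ t : ℝ) : ℝ := t * (2 - (t + 1) * μ) / 2

lemma kFl_nonneg {μ : ℝ} (hμ : 0 < μ) : 0 ≤ kFl μ :=
  Int.floor_nonneg.2 (by positivity)

lemma kFl_mul_le {μ : ℝ} (hμ : 0 < μ) : (kFl μ : ℝ) * μ ≤ 1 :=
  (le_div_iff₀ hμ).1 (Int.floor_le _)

lemma one_lt_kFl_add_one_mul {μ : ℝ} (hμ : 0 < μ) : 1 < ((kFl μ : ℝ) + 1) * μ :=
  (div_lt_iff₀ hμ).1 (Int.lt_floor_add_one _)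

lemma jumpGain_le_kFl {μ : ℝ} (hμ : 0 < μ) (j : ℤ) : jumpGain μ j ≤ jumpGain μ (kFl μ) := by
  have h₁ := kFl_mul_le hμ
  have h₂ := one_lt_kFl_add_one_mul hμ
  have key : jumpGain μ (kFl μ) - jumpGain μ j =
      ((kFl μ : ℝ) - j) * (2 - ((kFl μ : ℝ) + j + 1) * μ) / 2 := by
    unfold jumpGain; ring
  rcases lt_trichotomy j (kFl μ) with hj | rfl | hj
  · have hj' : (j : ℝ) + 1 ≤ kFl μ := by exact_mod_cast hj
    have : 0 ≤ 2 - ((kFl μ : ℝ) + j + 1) * μ := by nlinarith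
    nlinarith [mul_nonneg (by linarith : (0 : ℝ) ≤ kFl μ - j) this]
  · exact le_rfl
  · have hj' : (kFl μ : ℝ) + 1 ≤ j := by exact_mod_cast hj
    have : 2 - ((kFl μ : ℝ) + j + 1) * μ ≤ 0 := by nlinarith
    nlinarith [mul_nonneg_of_nonpos_of_nonpos (by linarith : (kFl μ : ℝ) - j ≤ 0) this]

lemma jumpGain_nonneg {μ : ℝ} (hμ : 0 < μ) {j : ℕ} (hj : (j : ℤ) ≤ kFl μ) : 0 ≤ jumpGain μ j := by
  have h₁ := kFl_mul_le hμ
  have hj' : (j : ℝ) ≤ kFl μ := by exact_mod_cast hj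
  unfold jumpGain
  rcases Nat.eq_zero_or_pos j with rfl | hpos
  · simp
  · have : (1 : ℝ) ≤ j := by exact_mod_cast hpos
    have : ((j : ℝ) + 1) * μ ≤ 2 := by nlinarith
    have : (0 : ℝ) ≤ j := by positivity
    nlinarith

lemma gammaC_eq {μ : ℝ} (hμ : 0 < μ) :
    gammaC μ = jumpGain μ (kFl μ) / (1 + jumpGain μ (kFl μ)) := by
  have h₁ := kFl_mul_le hμ
  have h₀ : (0 : ℝ) ≤ kFl μ := by exact_mod_cast kFl_nonneg hμ
  have hk : (kFl μ : ℝ) + 1 ≠ 0 := by linarith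
  have hk' : 2 - (kFl μ : ℝ) * μ ≠ 0 := by linarith
  have h1F : 1 + jumpGain μ (kFl μ) = ((kFl μ : ℝ) + 1) * (2 - (kFl μ : ℝ) * μ) / 2 := by
    unfold jumpGain; ring
  rw [gammaC, h1F]
  unfold jumpGain
  field_simp
  ring

lemma le_gammaC_iff {μ γ : ℝ} (hμ : 0 < μ) :
    γ ≤ gammaC μ ↔ γ ≤ (1 - γ) * jumpGain μ (kFl μ) := by
  have h₁ := kFl_mul_le hμ
  have h₀ : (0 : ℝ) ≤ kFl μ := by exact_mod_cast kFl_nonneg hμ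
  have hpos : 0 < 1 + jumpGain μ (kFl μ) := by unfold jumpGain; nlinarith
  rw [gammaC_eq hμ, le_div_iff₀ hpos]
  constructor <;> intro h <;> linarith

def argmaxSet (g : ℝ → EReal) (d : ℝ) : Set ℝ :=
  {y | ∀ z, g z - ((|d - z| : ℝ) : EReal) ≤ g y - ((|d - y| : ℝ) : EReal)}

lemma abs_add_abs_le_of_le {d d' a a' : ℝ} (hd : d ≤ d') (ha : a' ≤ a) :
    |d - a'| + |d' - a| ≤ |d - a| + |d' - a'| := by
  rcases abs_cases (d - a') with ⟨e1, _⟩ | ⟨e1, _⟩ <;>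
    rcases abs_cases (d' - a) with ⟨e2, _⟩ | ⟨e2, _⟩ <;>
    rcases abs_cases (d - a) with ⟨e3, _⟩ | ⟨e3, _⟩ <;>
    rcases abs_cases (d' - a') with ⟨e4, _⟩ | ⟨e4, _⟩ <;>
    rw [e1, e2, e3, e4] <;> linarith

lemma argmaxSet_exchange {g : ℝ → EReal} {d d' a a' r r' : ℝ} (hd : d ≤ d')
    (ha : a ∈ argmaxSet g d) (ha' : a' ∈ argmaxSet g d') (hlt : a' < a)
    (hr : g a = r) (hr' : g a' = r') :
    a' ∈ argmaxSet g d ∧ a ∈ argmaxSet g d' := by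
  have h₁ : r' - |d - a'| ≤ r - |d - a| := by
    have := ha a'
    rwa [hr, hr', ← EReal.coe_sub, ← EReal.coe_sub, EReal.coe_le_coe_iff] at this
  have h₂ : r - |d' - a| ≤ r' - |d' - a'| := by
    have := ha' a
    rwa [hr, hr', ← EReal.coe_sub, ← EReal.coe_sub, EReal.coe_le_coe_iff] at this
  have hq := abs_add_abs_le_of_le hd hlt.le
  constructor
  · intro z
    refine (ha z).trans (le_of_eq ?_)
    rw [hr, hr', ← EReal.coe_sub, ← EReal.coe_sub, EReal.coe_eq_coe_iff]
    linarith
  · intro z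
    refine (ha' z).trans (le_of_eq ?_)
    rw [hr, hr', ← EReal.coe_sub, ← EReal.coe_sub, EReal.coe_eq_coe_iff]
    linarith

lemma exists_iterate_eq_of_min_le {f : ℝ → ℝ} {s : Set ℝ} {v q : ℝ} (hv : 0 < v)
    (hmaps : MapsTo f s s) (hstep : ∀ x ∈ s, min (x + v) q ≤ f x)
    (hfix : ∀ x ∈ s, q ≤ x → f x = q) {x : ℝ} (hx : x ∈ s) :
    ∃ N : ℕ, ∀ n, N ≤ n → f^[n] x = q := by
  have key : ∀ n : ℕ, f^[n] x ∈ s ∧ min (x + n * v) q ≤ f^[n] x := by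
    intro n
    induction n with
    | zero => simp [hx]
    | succ n ih =>
      rw [Function.iterate_succ_apply']
      refine ⟨hmaps ih.1, le_trans (le_min ?_ (min_le_right _ _)) (hstep _ ih.1)⟩
      rcases min_le_iff.1 ih.2 with h | h
      · exact (min_le_left _ _).trans (by push_cast; linarith)
      · exact (min_le_right _ _).trans (by linarith)
  obtain ⟨N, hN⟩ := exists_nat_ge ((q - x) / v)
  rw [div_le_iff₀ hv] at hN
  refine ⟨N + 1, fun n hn => ?_⟩
  obtain ⟨m, rfl⟩ : ∃ m, n = m + 1 := ⟨n - 1, by omega⟩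
  have hNm : (N : ℝ) * v ≤ m * v :=
    mul_le_mul_of_nonneg_right (by exact_mod_cast (by omega : N ≤ m)) hv.le
  rw [Function.iterate_succ_apply']
  exact hfix _ (key m).1 ((le_min (by linarith) le_rfl).trans (key m).2)

lemma exists_nat_neg_mul_le_lt {v x : ℝ} (hv : 0 < v) (hx : x < v) :
    ∃ n : ℕ, -(n * v) ≤ x ∧ x < v - n * v := by
  rcases le_or_gt x 0 with hx₀ | hx₀
  · refine ⟨⌈-x / v⌉₊, ?_, ?_⟩
    · have := Nat.le_ceil (-x / v)
      rw [div_le_iff₀ hv] at this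
      linarith
    · have := Nat.ceil_lt_add_one (div_nonneg (neg_nonneg.2 hx₀) hv.le)
      rw [← sub_lt_iff_lt_add, lt_div_iff₀ hv] at this
      linarith
  · exact ⟨0, by simpa using hx₀.le, by simpa using hx⟩

structure PlateauShape (g : ℝ → EReal) (G : ℝ → ℝ) (L p : ℝ) : Prop where
  le_plateau : L ≤ p
  plateau_nonpos : p ≤ 0
  eq_bot : ∀ y ∉ Icc L 0, g y = ⊥
  eq_coe : ∀ y ∈ Icc L 0, g y = G y
  le_neg : ∀ y ∈ Icc L 0, G y ≤ -y
  eq_neg : ∀ y ∈ Icc p 0, G y = -y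
  strictMonoOn : StrictMonoOn (fun y => G y + y) (Icc L p)

namespace PlateauShape

variable {g : ℝ → EReal} {G : ℝ → ℝ} {L p d y : ℝ}

lemma mem_Icc (P : PlateauShape g G L p) (hy : y ∈ argmaxSet g d) : y ∈ Icc L 0 := by
  by_contra h
  have := hy 0
  rw [P.eq_bot y h, EReal.bot_sub, le_bot_iff,
    P.eq_coe 0 ⟨P.le_plateau.trans P.plateau_nonpos, le_rfl⟩, ← EReal.coe_sub] at this
  exact EReal.coe_ne_bot _ this

lemma min_le (P : PlateauShape g G L p) (hd : L ≤ d) (hy : y ∈ argmaxSet g d) :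
    min d p ≤ y := by
  by_contra! hlt
  have hyI := P.mem_Icc hy
  have hmL : L ≤ min d p := le_min hd P.le_plateau
  have hmono : G y + y < G (min d p) + min d p :=
    P.strictMonoOn ⟨hyI.1, (hlt.trans_le (min_le_right _ _)).le⟩ ⟨hmL, min_le_right _ _⟩ hlt
  have := hy (min d p)
  rw [P.eq_coe y hyI, P.eq_coe _ ⟨hmL, (min_le_right _ _).trans P.plateau_nonpos⟩,
    ← EReal.coe_sub, ← EReal.coe_sub, EReal.coe_le_coe_iff,
    abs_of_nonneg (sub_nonneg.2 (min_le_left d p)),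
    abs_of_nonneg (by linarith [min_le_left d p] : 0 ≤ d - y)] at this
  linarith

lemma mem_argmaxSet (P : PlateauShape g G L p) (hy : y ∈ Icc p (min d 0)) :
    y ∈ argmaxSet g d := by
  have hy0 : y ≤ 0 := hy.2.trans (min_le_right _ _)
  have hyd : y ≤ d := hy.2.trans (min_le_left _ _)
  intro z
  rw [P.eq_coe y ⟨P.le_plateau.trans hy.1, hy0⟩, P.eq_neg y ⟨hy.1, hy0⟩, ← EReal.coe_sub,
    abs_of_nonneg (sub_nonneg.2 hyd)]
  by_cases hz : z ∈ Icc L 0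
  · rw [P.eq_coe z hz, ← EReal.coe_sub, EReal.coe_le_coe_iff]
    linarith [P.le_neg z hz, le_abs_self (d - z)]
  · rw [P.eq_bot z hz, EReal.bot_sub]
    exact bot_le

variable {v : ℝ} {A : ℝ → ℝ}

lemma monotoneOn_of_isLeast (P : PlateauShape g G L p)
    (hA : ∀ x ∈ Icc L 0, IsLeast (argmaxSet g (x + v)) (A x)) : MonotoneOn A (Icc L 0) := by
  intro a ha b hb hab
  by_contra! hlt
  have hA₀ := (hA a ha).1
  have hA₁ := (hA b hb).1
  have := argmaxSet_exchange (add_le_add_left hab v) hA₀ hA₁ hlt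
    (P.eq_coe _ (P.mem_Icc hA₀)) (P.eq_coe _ (P.mem_Icc hA₁))
  exact hlt.not_ge ((hA a ha).2 this.1)

lemma monotoneOn_of_isGreatest (P : PlateauShape g G L p)
    (hA : ∀ x ∈ Icc L 0, IsGreatest (argmaxSet g (x + v)) (A x)) : MonotoneOn A (Icc L 0) := by
  intro a ha b hb hab
  by_contra! hlt
  have hA₀ := (hA a ha).1
  have hA₁ := (hA b hb).1
  have := argmaxSet_exchange (add_le_add_left hab v) hA₀ hA₁ hlt
    (P.eq_coe _ (P.mem_Icc hA₀)) (P.eq_coe _ (P.mem_Icc hA₁))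
  exact hlt.not_ge ((hA b hb).2 this.2)

lemma exists_iterate_eq_of_isLeast (P : PlateauShape g G L p) (hv : 0 < v)
    (hA : ∀ x ∈ Icc L 0, IsLeast (argmaxSet g (x + v)) (A x)) {x : ℝ} (hx : x ∈ Icc L 0) :
    ∃ N : ℕ, ∀ n, N ≤ n → A^[n] x = p := by
  have hstep : ∀ y ∈ Icc L 0, min (y + v) p ≤ A y :=
    fun y hy => P.min_le (by linarith [hy.1]) (hA y hy).1
  refine exists_iterate_eq_of_min_le hv (fun y hy => P.mem_Icc (hA y hy).1) hstep
    (fun y hy hpy => le_antisymm ?_ ?_) hx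
  · exact (hA y hy).2 (P.mem_argmaxSet ⟨le_rfl, le_min (by linarith) P.plateau_nonpos⟩)
  · simpa [min_eq_right (by linarith : p ≤ y + v)] using hstep y hy

lemma exists_iterate_eq_of_isGreatest (P : PlateauShape g G L p) (hv : 0 < v)
    (hA : ∀ x ∈ Icc L 0, IsGreatest (argmaxSet g (x + v)) (A x)) {x : ℝ} (hx : x ∈ Icc L 0) :
    ∃ N : ℕ, ∀ n, N ≤ n → A^[n] x = 0 := by
  have hstep : ∀ y ∈ Icc L 0, min (y + v) 0 ≤ A y := by
    intro y hy
    rcases le_or_gt (y + v) p with hyp | hyp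
    · have := P.min_le (by linarith [hy.1]) (hA y hy).1
      exact (min_le_left _ _).trans (by rwa [min_eq_left hyp] at this)
    · exact (hA y hy).2 (P.mem_argmaxSet ⟨le_min hyp.le P.plateau_nonpos, le_rfl⟩)
  refine exists_iterate_eq_of_min_le hv (fun y hy => P.mem_Icc (hA y hy).1) hstep
    (fun y hy hy0 => le_antisymm (P.mem_Icc (hA y hy).1).2 ?_) hx
  simpa [min_eq_right (by linarith : (0 : ℝ) ≤ y + v)] using hstep y hy

end PlateauShape

section

variable {γ μ v L s : ℝ} {g : ℝ → EReal} {h : ℝ → ℝ}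

namespace IsTravelingWave

lemma eq_bot (hg : IsTravelingWave γ μ g v L) {y : ℝ} (hy : y ∉ Icc L 0) : g y = ⊥ :=
  hg.2.2.2.2.2.1 y hy

lemma gIter_eq (hg : IsTravelingWave γ μ g v L) {n : ℕ} (hn : 1 ≤ n) (x : ℝ) :
    gIter γ μ g n x = g (x - n * v) :=
  hg.2.2.2.2.2.2 n hn x

lemma eq_piE_Phi (hg : IsTravelingWave γ μ g v L) (x : ℝ) :
    g (x - v) = piE (Phi γ μ g (sNext γ μ g) x) := by
  simpa [gIter] using (hg.gIter_eq le_rfl x).symm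

lemma eq_piE_Phi_of_two_steps (hg : IsTravelingWave γ μ g v L) (x : ℝ) :
    g (x - v) = piE (Phi γ μ g (sNext γ μ (fun y => g (y - v)) - v) x) := by
  have hg₁ : gIter γ μ g 1 = fun y => g (y - v) := funext fun y => by
    simpa using hg.gIter_eq le_rfl y
  have := hg.gIter_eq (n := 2) (by norm_num) (x + v)
  rw [gIter, hg₁] at this
  dsimp only at this
  rw [Phi_comp_sub, add_sub_cancel_right] at this
  convert this.symm using 2
  push_cast
  ring

lemma pos_of_mem_Ioo (hg : IsTravelingWave γ μ g v L) {y : ℝ} (hy : y ∈ Ioo L 0) : 0 < g y := by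
  obtain ⟨conc, hne, -, hSup, hInf, -, -⟩ := hg
  obtain ⟨x₁, hx₁, hyx₁⟩ := exists_lt_of_lt_csSup hne (hSup ▸ hy.2)
  obtain ⟨x₂, hx₂, hx₂y⟩ := exists_lt_of_csInf_lt hne (hInf ▸ hy.1)
  set t := (x₁ - y) / (x₁ - x₂)
  have ht0 : 0 < t := div_pos (by linarith) (by linarith)
  have ht1 : t < 1 := (div_lt_one (by linarith)).2 (by linarith)
  have hcomb : t * x₂ + (1 - t) * x₁ = y := by
    have : x₁ - x₂ ≠ 0 := by linarith
    simp only [t]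
    field_simp
    ring
  have h₁ : (0 : EReal) < t * g x₂ := EReal.mul_pos (by exact_mod_cast ht0) hx₂
  have h₂ : (0 : EReal) ≤ ((1 - t : ℝ) : EReal) * g x₁ :=
    (EReal.mul_pos (by exact_mod_cast sub_pos.2 ht1) hx₁).le
  calc (0 : EReal) < t * g x₂ + 0 := by rwa [add_zero]
    _ ≤ t * g x₂ + ((1 - t : ℝ) : EReal) * g x₁ := add_le_add le_rfl h₂
    _ ≤ g y := hcomb ▸ conc x₂ x₁ t ht0.le ht1.le

lemma top_of_iSup_eq_top (hg : IsTravelingWave γ μ g v L) {x : ℝ}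
    (hx : (⨆ y, g y - ((|x - y| : ℝ) : EReal)) = ⊤) : g (x - v) = ⊤ := by
  rw [hg.eq_piE_Phi, Phi, hx, EReal.coe_add_top, EReal.top_sub_coe]
  exact if_pos le_top

lemma ne_top (hg : IsTravelingWave γ μ g v L) (y : ℝ) : g y ≠ ⊤ := by
  intro hy
  have htop : (⨆ z, g z - ((|1 + v - z| : ℝ) : EReal)) = ⊤ :=
    top_le_iff.1 (le_iSup_of_le y (by rw [hy, EReal.top_sub_coe]))
  have h1 := hg.top_of_iSup_eq_top htop
  rw [add_sub_cancel_right, hg.eq_bot (fun h => by linarith [h.2])] at h1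
  exact bot_ne_top h1

lemma iSup_ne_top (hg : IsTravelingWave γ μ g v L) (x : ℝ) :
    (⨆ y, g y - ((|x - y| : ℝ) : EReal)) ≠ ⊤ :=
  fun hx => hg.ne_top _ (hg.top_of_iSup_eq_top hx)

lemma iSup_ne_bot (hg : IsTravelingWave γ μ g v L) (x : ℝ) :
    (⨆ y, g y - ((|x - y| : ℝ) : EReal)) ≠ ⊥ := by
  obtain ⟨y₀, hy₀⟩ := hg.2.1
  refine ne_bot_of_le_ne_bot ?_ (le_iSup _ y₀)
  lift g y₀ to ℝ using ⟨hg.ne_top y₀, ne_bot_of_gt hy₀⟩ with r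
  rw [← EReal.coe_sub]
  exact EReal.coe_ne_bot _

end IsTravelingWave

noncomputable def fitness (γ μ : ℝ) (h : ℝ → ℝ) (ξ x : ℝ) : ℝ :=
  1 - γ + h x - μ * max (ξ - x) 0

structure WaveSupConv (γ μ v L s : ℝ) (g : ℝ → EReal) (h : ℝ → ℝ) : Prop where
  gamma_pos : 0 < γ
  gamma_lt_one : γ < 1
  mu_pos : 0 < μ
  isTravelingWave : IsTravelingWave γ μ g v L
  s_eq : s = sNext γ μ g
  iSup_eq : ∀ x, (⨆ y, g y - ((|x - y| : ℝ) : EReal)) = h x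

lemma IsTravelingWave.exists_waveSupConv (hγ : γ ∈ Ioo 0 1) (hμ : 0 < μ)
    (hg : IsTravelingWave γ μ g v L) : ∃ h, WaveSupConv γ μ v L (sNext γ μ g) g h :=
  ⟨_, hγ.1, hγ.2, hμ, hg, rfl,
    fun x => (EReal.coe_toReal (hg.iSup_ne_top x) (hg.iSup_ne_bot x)).symm⟩

namespace WaveSupConv

lemma Phi_eq (W : WaveSupConv γ μ v L s g h) (ξ x : ℝ) :
    Phi γ μ g ξ x = fitness γ μ h ξ x := by
  simp only [Phi, W.iSup_eq, fitness, EReal.coe_sub, EReal.coe_add]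

lemma g_eq (W : WaveSupConv γ μ v L s g h) (y : ℝ) :
    g y = piE (fitness γ μ h s (y + v)) := by
  rw [← W.Phi_eq, W.s_eq, ← W.isTravelingWave.eq_piE_Phi, add_sub_cancel_right]

lemma eq_coe_of_fitness_nonneg (W : WaveSupConv γ μ v L s g h) {y : ℝ}
    (hy : 0 ≤ fitness γ μ h s (y + v)) : g y = fitness γ μ h s (y + v) := by
  rw [W.g_eq, piE_coe_of_nonneg hy]

lemma eq_bot_or_exists_eq_coe (W : WaveSupConv γ μ v L s g h) (y : ℝ) :
    g y = ⊥ ∨ ∃ r : ℝ, g y = r := by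
  rcases lt_or_ge (fitness γ μ h s (y + v)) 0 with hy | hy
  · exact Or.inl (by rw [W.g_eq, piE_coe_of_neg hy])
  · exact Or.inr ⟨_, W.eq_coe_of_fitness_nonneg hy⟩

lemma sub_le_h (W : WaveSupConv γ μ v L s g h) (x y : ℝ) :
    g y - ((|x - y| : ℝ) : EReal) ≤ h x :=
  W.iSup_eq x ▸ le_iSup (fun y => g y - ((|x - y| : ℝ) : EReal)) y

lemma le_h (W : WaveSupConv γ μ v L s g h) {y r : ℝ} (x : ℝ) (hr : g y = r) :
    r - |x - y| ≤ h x := by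
  have := W.sub_le_h x y
  rwa [hr, ← EReal.coe_sub, EReal.coe_le_coe_iff] at this

lemma h_le (W : WaveSupConv γ μ v L s g h) {x B : ℝ}
    (hB : ∀ y, g y - ((|x - y| : ℝ) : EReal) ≤ B) : h x ≤ B := by
  rw [← EReal.coe_le_coe_iff, ← W.iSup_eq]
  exact iSup_le hB

lemma h_le_of_forall_le (W : WaveSupConv γ μ v L s g h) {B : ℝ} (hB : ∀ y, g y ≤ B) (x : ℝ) :
    h x ≤ B :=
  W.h_le fun y => (EReal.sub_le_sub (hB y) le_rfl).trans
    (by rw [← EReal.coe_sub, EReal.coe_le_coe_iff]; linarith [abs_nonneg (x - y)])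

lemma h_le_add (W : WaveSupConv γ μ v L s g h) (x x' : ℝ) : h x' ≤ h x + |x' - x| := by
  refine W.h_le fun y => ?_
  rcases W.eq_bot_or_exists_eq_coe y with hy | ⟨r, hy⟩
  · rw [hy, EReal.bot_sub]
    exact bot_le
  · rw [hy, ← EReal.coe_sub, EReal.coe_le_coe_iff]
    have := abs_sub_abs_le_abs_sub (x - y) (x' - y)
    rw [sub_sub_sub_cancel_right, abs_sub_comm x x'] at this
    linarith [W.le_h x hy]

lemma continuous_fitness (W : WaveSupConv γ μ v L s g h) (ξ : ℝ) :
    Continuous (fitness γ μ h ξ) := by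
  have hh : Continuous h := (LipschitzWith.of_le_add fun x x' => by
    rw [Real.dist_eq]; exact W.h_le_add x' x).continuous
  unfold fitness
  fun_prop

lemma fitness_sub_le (W : WaveSupConv γ μ v L s g h) {ξ x x' : ℝ} (hx : x ≤ x') :
    fitness γ μ h ξ x - (x' - x) ≤ fitness γ μ h ξ x' := by
  have h₁ := W.h_le_add x' x
  rw [abs_of_nonpos (by linarith)] at h₁
  have h₂ : μ * max (ξ - x') 0 ≤ μ * max (ξ - x) 0 :=
    mul_le_mul_of_nonneg_left (max_le_max (by linarith) le_rfl) W.mu_pos.le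
  unfold fitness
  linarith

lemma fitness_add_le (W : WaveSupConv γ μ v L s g h) {ξ x x' : ℝ} (hx : x ≤ x') (hx' : x' ≤ ξ) :
    fitness γ μ h ξ x + (μ - 1) * (x' - x) ≤ fitness γ μ h ξ x' := by
  have h₁ := W.h_le_add x' x
  rw [abs_of_nonpos (by linarith)] at h₁
  unfold fitness
  rw [max_eq_left (by linarith), max_eq_left (by linarith)]
  linarith

end WaveSupConv

namespace WaveSupConv

lemma fitness_neg (W : WaveSupConv γ μ v L s g h) {y : ℝ} (hy : y ∉ Icc L 0) :
    fitness γ μ h s (y + v) < 0 := by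
  by_contra! h₀
  have := W.eq_coe_of_fitness_nonneg h₀
  rw [W.isTravelingWave.eq_bot hy] at this
  exact EReal.coe_ne_bot _ this.symm

lemma fitness_pos (W : WaveSupConv γ μ v L s g h) {y : ℝ} (hy : 0 < g y) :
    0 < fitness γ μ h s (y + v) := by
  rcases lt_or_ge (fitness γ μ h s (y + v)) 0 with h₀ | h₀
  · rw [W.g_eq, piE_coe_of_neg h₀] at hy
    exact absurd hy not_lt_bot
  · rw [W.eq_coe_of_fitness_nonneg h₀] at hy
    exact_mod_cast hy

lemma fitness_nonpos (W : WaveSupConv γ μ v L s g h) {x : ℝ} (hx : x ∉ Ioo (L + v) v) :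
    fitness γ μ h s x ≤ 0 := by
  have hout : ∀ z ∈ (Icc (L + v) v)ᶜ, fitness γ μ h s z ≤ 0 := fun z hz => by
    have := W.fitness_neg (y := z - v) fun hm => hz ⟨by linarith [hm.1], by linarith [hm.2]⟩
    rw [sub_add_cancel] at this
    exact this.le
  exact le_on_closure hout (W.continuous_fitness s).continuousOn continuousOn_const
    (by rwa [closure_compl, interior_Icc])

lemma L_neg (W : WaveSupConv γ μ v L s g h) : L < 0 := by
  obtain ⟨y₀, hy₀⟩ := W.isTravelingWave.2.1
  have hy₀L : y₀ ∈ Icc L 0 := by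
    by_contra hy
    rw [mem_ofPred_eq, W.isTravelingWave.eq_bot hy] at hy₀
    exact not_lt_bot hy₀
  by_contra! hL
  have hy₀v : y₀ + v = v := by linarith [hy₀L.1, hy₀L.2]
  have := W.fitness_pos hy₀
  rw [hy₀v] at this
  exact this.not_ge (W.fitness_nonpos fun h => lt_irrefl _ h.2)

lemma fitness_nonneg (W : WaveSupConv γ μ v L s g h) {x : ℝ} (hx : x ∈ Icc (L + v) v) :
    0 ≤ fitness γ μ h s x := by
  have hin : ∀ z ∈ Ioo (L + v) v, 0 ≤ fitness γ μ h s z := fun z hz => by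
    have := W.fitness_pos (W.isTravelingWave.pos_of_mem_Ioo (y := z - v)
      ⟨by linarith [hz.1], by linarith [hz.2]⟩)
    rw [sub_add_cancel] at this
    exact this.le
  exact le_on_closure hin continuousOn_const (W.continuous_fitness s).continuousOn
    (by rwa [closure_Ioo (by linarith [W.L_neg])])

lemma fitness_v (W : WaveSupConv γ μ v L s g h) : fitness γ μ h s v = 0 :=
  le_antisymm (W.fitness_nonpos fun h => lt_irrefl _ h.2)
    (W.fitness_nonneg ⟨by linarith [W.L_neg], le_rfl⟩)

lemma eq_coe_of_mem (W : WaveSupConv γ μ v L s g h) {y : ℝ} (hy : y ∈ Icc L 0) :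
    g y = fitness γ μ h s (y + v) :=
  W.eq_coe_of_fitness_nonneg (W.fitness_nonneg ⟨by linarith [hy.1], by linarith [hy.2]⟩)

lemma fitness_le_neg (W : WaveSupConv γ μ v L s g h) {y : ℝ} (hy : y ≤ 0) :
    fitness γ μ h s (y + v) ≤ -y := by
  have := W.fitness_sub_le (ξ := s) (x := y + v) (x' := v) (by linarith)
  rw [W.fitness_v] at this
  linarith

lemma le_neg (W : WaveSupConv γ μ v L s g h) (y : ℝ) : g y ≤ (-y : ℝ) := by
  by_cases hy : y ∈ Icc L 0
  · rw [W.eq_coe_of_mem hy, EReal.coe_le_coe_iff]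
    exact W.fitness_le_neg hy.2
  · rw [W.isTravelingWave.eq_bot hy]
    exact bot_le

lemma h_le_neg (W : WaveSupConv γ μ v L s g h) (w : ℝ) : h w ≤ -w :=
  W.h_le fun y => (EReal.sub_le_sub (W.le_neg y) le_rfl).trans
    (by rw [← EReal.coe_sub, EReal.coe_le_coe_iff]; linarith [le_abs_self (w - y)])

lemma h_le_neg_L (W : WaveSupConv γ μ v L s g h) (w : ℝ) : h w ≤ -L := by
  refine W.h_le_of_forall_le (fun y => ?_) w
  by_cases hy : y ∈ Icc L 0
  · exact (W.le_neg y).trans (EReal.coe_le_coe_iff.2 (by linarith [hy.1]))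
  · rw [W.isTravelingWave.eq_bot hy]
    exact bot_le

lemma h_of_nonneg (W : WaveSupConv γ μ v L s g h) {w : ℝ} (hw : 0 ≤ w) : h w = -w := by
  have hg0 : g 0 = ((0 : ℝ) : EReal) := by
    rw [W.eq_coe_of_mem ⟨W.L_neg.le, le_rfl⟩, zero_add, W.fitness_v]
  have := W.le_h w hg0
  rw [sub_zero, abs_of_nonneg hw] at this
  exact le_antisymm (W.h_le_neg w) (by linarith)

lemma fitness_le_h (W : WaveSupConv γ μ v L s g h) {w : ℝ}
    (hw : 0 ≤ fitness γ μ h s (w + v)) : fitness γ μ h s (w + v) ≤ h w := by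
  simpa using W.le_h w (W.eq_coe_of_fitness_nonneg hw)

end WaveSupConv

noncomputable def maxFitness (γ μ : ℝ) (h : ℝ → ℝ) (ξ : ℝ) : ℝ :=
  ⨆ x, fitness γ μ h ξ x

namespace WaveSupConv

lemma bddAbove_fitness (W : WaveSupConv γ μ v L s g h) (ξ : ℝ) :
    BddAbove (range (fitness γ μ h ξ)) := by
  refine ⟨1 - γ - L, ?_⟩
  rintro _ ⟨x, rfl⟩
  have := mul_nonneg W.mu_pos.le (le_max_right (ξ - x) 0)
  unfold fitness
  linarith [W.h_le_neg_L x]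

lemma iSup_Phi (W : WaveSupConv γ μ v L s g h) (ξ : ℝ) :
    (⨆ x, Phi γ μ g ξ x) = maxFitness γ μ h ξ := by
  simp_rw [W.Phi_eq]
  exact (Monotone.map_ciSup_of_continuousAt continuous_coe_real_ereal.continuousAt
    EReal.coe_strictMono.monotone (W.bddAbove_fitness ξ)).symm

lemma setOf_le_iSup_Phi (W : WaveSupConv γ μ v L s g h) :
    {ξ : ℝ | (γ : EReal) ≤ ⨆ x, Phi γ μ g ξ x} = {ξ | γ ≤ maxFitness γ μ h ξ} := by
  simp_rw [W.iSup_Phi, EReal.coe_le_coe_iff]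

lemma continuous_maxFitness (W : WaveSupConv γ μ v L s g h) :
    Continuous (maxFitness γ μ h) := by
  refine (LipschitzWith.of_le_add_mul' μ fun ξ' ξ => ciSup_le fun x => ?_).continuous
  have hmax : max (ξ - x) 0 - max (ξ' - x) 0 ≤ |ξ' - ξ| := by
    have := (abs_le.1 (abs_max_sub_max_le_abs (ξ - x) (ξ' - x) 0)).2
    rwa [sub_sub_sub_cancel_right, abs_sub_comm] at this
  have hμ := mul_le_mul_of_nonneg_left hmax W.mu_pos.le
  have hle := le_ciSup (W.bddAbove_fitness ξ) x
  rw [mul_sub] at hμ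
  rw [Real.dist_eq]
  unfold fitness at *
  linarith

lemma maxFitness_nonpos (W : WaveSupConv γ μ v L s g h) {ξ : ℝ}
    (hξ : 1 - γ + (1 - γ - L) / μ ≤ ξ) : maxFitness γ μ h ξ ≤ 0 := by
  refine ciSup_le fun x => ?_
  unfold fitness
  rcases le_total (1 - γ) x with hx | hx
  · nlinarith [W.h_le_neg x, mul_nonneg W.mu_pos.le (le_max_right (ξ - x) 0)]
  · have h₁ : (1 - γ - L) / μ ≤ ξ - x := by linarith
    rw [div_le_iff₀' W.mu_pos] at h₁
    nlinarith [W.h_le_neg_L x, mul_le_mul_of_nonneg_left (le_max_left (ξ - x) 0) W.mu_pos.le]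

/-- If no threshold reached `γ`, the junk value `sNext = sSup ∅ = 0` would be the threshold at
every step, and the two-step equation of the traveling wave would fail. -/
lemma threshold_set_nonempty (W : WaveSupConv γ μ v L s g h) :
    {ξ : ℝ | (γ : EReal) ≤ ⨆ x, Phi γ μ g ξ x}.Nonempty := by
  by_contra hT
  rw [not_nonempty_iff_eq_empty] at hT
  have hs : s = 0 := by rw [W.s_eq, sNext, hT, Real.sSup_empty]
  have hs₁ : sNext γ μ (fun y => g (y - v)) = 0 := by
    rw [sNext, setOf_le_iSup_Phi_comp_sub, hT, preimage_empty, Real.sSup_empty]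
  have h₀ : 0 < fitness γ μ h s 0 := by
    rw [fitness, W.h_of_nonneg le_rfl, hs]
    simpa using W.gamma_lt_one
  have h₀mem : (0 : ℝ) ∈ Ioo (L + v) v := by
    by_contra hm
    exact h₀.not_ge (W.fitness_nonpos hm)
  obtain ⟨w, hLw, hw⟩ : ∃ w, L + v < w ∧ w < 0 := ⟨(L + v) / 2, by linarith [h₀mem.1],
    by linarith [h₀mem.1]⟩
  have hgw : 0 < g (w - v) :=
    W.isTravelingWave.pos_of_mem_Ioo ⟨by linarith, by linarith [h₀mem.2]⟩
  have h₁ := W.g_eq (w - v)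
  rw [sub_add_cancel, hs] at h₁
  have h₂ := W.isTravelingWave.eq_piE_Phi_of_two_steps w
  rw [hs₁, zero_sub, W.Phi_eq] at h₂
  have hpos₁ := W.fitness_pos hgw
  rw [sub_add_cancel, hs] at hpos₁
  have hlt : fitness γ μ h 0 w < fitness γ μ h (-v) w := by
    unfold fitness
    rw [max_eq_left (by linarith : (0 : ℝ) ≤ 0 - w)]
    have : max (-v - w) 0 < 0 - w := max_lt (by linarith [h₀mem.2]) (by linarith)
    nlinarith [W.mu_pos]
  rw [h₁, piE_coe_of_nonneg hpos₁.le, piE_coe_of_nonneg (hpos₁.trans hlt).le,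
    EReal.coe_eq_coe_iff] at h₂
  exact hlt.ne h₂

lemma maxFitness_s (W : WaveSupConv γ μ v L s g h) : maxFitness γ μ h s = γ := by
  have hS : s = sSup {ξ | γ ≤ maxFitness γ μ h ξ} := by rw [W.s_eq, sNext, W.setOf_le_iSup_Phi]
  have hne : {ξ | γ ≤ maxFitness γ μ h ξ}.Nonempty := by
    rw [← W.setOf_le_iSup_Phi]
    exact W.threshold_set_nonempty
  have hbdd : BddAbove {ξ | γ ≤ maxFitness γ μ h ξ} := ⟨1 - γ + (1 - γ - L) / μ, fun ξ hξ => by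
    by_contra! hξ'
    linarith [W.maxFitness_nonpos hξ'.le, W.gamma_pos, show γ ≤ maxFitness γ μ h ξ from hξ]⟩
  refine le_antisymm ?_ (hS ▸ (isClosed_le continuous_const W.continuous_maxFitness).csSup_mem
    hne hbdd)
  refine le_on_closure (s := Ioi s) (fun ξ hξ => ?_) W.continuous_maxFitness.continuousOn
    continuousOn_const (by rw [closure_Ioi]; exact mem_Ici.2 le_rfl)
  by_contra! hξ'
  exact (not_le.2 hξ) (hS ▸ le_csSup hbdd hξ'.le)

lemma exists_fitness_eq_gamma (W : WaveSupConv γ μ v L s g h) :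
    (∀ x, fitness γ μ h s x ≤ γ) ∧ ∃ x₀, fitness γ μ h s x₀ = γ := by
  have hle : ∀ x, fitness γ μ h s x ≤ γ :=
    fun x => (le_ciSup (W.bddAbove_fitness s) x).trans W.maxFitness_s.le
  have hLv : L + v ≤ v := by linarith [W.L_neg]
  obtain ⟨x₀, -, hmax⟩ := isCompact_Icc.exists_isMaxOn (nonempty_Icc.2 hLv)
    (W.continuous_fitness s).continuousOn
  refine ⟨hle, x₀, le_antisymm (hle x₀) (W.maxFitness_s.symm.le.trans (ciSup_le fun x => ?_))⟩
  by_cases hx : x ∈ Icc (L + v) v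
  · exact hmax hx
  · have h₁ := W.fitness_nonpos fun h => hx (Ioo_subset_Icc_self h)
    have h₂ : fitness γ μ h s v ≤ fitness γ μ h s x₀ := hmax (right_mem_Icc.2 hLv)
    linarith [W.fitness_v]

end WaveSupConv

namespace WaveSupConv

lemma le_gamma (W : WaveSupConv γ μ v L s g h) (y : ℝ) : g y ≤ γ := by
  rw [W.g_eq]
  exact (piE_le _).trans (EReal.coe_le_coe_iff.2 (W.exists_fitness_eq_gamma.1 _))

lemma v_pos (W : WaveSupConv γ μ v L s g h) : 0 < v := by
  obtain ⟨-, x₀, hx₀⟩ := W.exists_fitness_eq_gamma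
  by_contra! hv
  have h₀ : fitness γ μ h s 0 ≤ 0 := W.fitness_nonpos fun hm => by linarith [hm.2]
  have hx₀neg : x₀ < 0 := by
    by_contra! hx
    linarith [W.fitness_nonpos (x := x₀) fun hm => by linarith [hm.2], W.gamma_pos]
  have hhx₀ : h x₀ ≤ γ := W.h_le_of_forall_le W.le_gamma x₀
  rw [fitness, W.h_of_nonneg le_rfl] at h₀
  rw [fitness] at hx₀
  rcases le_total s 0 with hs | hs
  · rw [max_eq_right (by linarith)] at h₀
    linarith [W.gamma_lt_one]
  · rw [max_eq_left (by linarith)] at h₀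
    rw [max_eq_left (by linarith)] at hx₀
    nlinarith [mul_pos W.mu_pos (neg_pos.2 hx₀neg)]

lemma v_eq (W : WaveSupConv γ μ v L s g h) : v = 1 - γ - μ * max (s - v) 0 := by
  have := W.fitness_v
  rw [fitness, W.h_of_nonneg W.v_pos.le] at this
  linarith

lemma concaveOn (W : WaveSupConv γ μ v L s g h) :
    ConcaveOn ℝ (Icc L 0) (fun y => fitness γ μ h s (y + v)) := by
  refine ⟨convex_Icc L 0, fun x hx y hy a b ha hb hab => ?_⟩
  obtain rfl : b = 1 - a := by linarith
  have hxy := convex_Icc L 0 hx hy ha hb hab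
  have := W.isTravelingWave.1 x y a ha (by linarith)
  simp only [smul_eq_mul] at hxy ⊢
  rwa [W.eq_coe_of_mem hx, W.eq_coe_of_mem hy, W.eq_coe_of_mem hxy, ← EReal.coe_mul,
    ← EReal.coe_mul, ← EReal.coe_add, EReal.coe_le_coe_iff] at this

/-- By concavity, right of the maximiser `x₀ - v` of the profile the supremum defining `h w` is
attained at `y = w`. -/
lemma h_eq_fitness (W : WaveSupConv γ μ v L s g h) {x₀ : ℝ}
    (hle : ∀ x, fitness γ μ h s x ≤ γ) (hx₀ : fitness γ μ h s x₀ = γ) {w : ℝ}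
    (hw : w ∈ Icc (x₀ - v) 0) : h w = fitness γ μ h s (w + v) := by
  have hx₀mem : x₀ ∈ Ioo (L + v) v := by
    by_contra hm
    linarith [W.fitness_nonpos hm, W.gamma_pos]
  have hx₀L : x₀ - v ∈ Icc L 0 := ⟨by linarith [hx₀mem.1], by linarith [hx₀mem.2]⟩
  have hwL : w ∈ Icc L 0 := ⟨hx₀L.1.trans hw.1, hw.2⟩
  refine le_antisymm (W.h_le fun y => ?_) (W.fitness_le_h (W.fitness_nonneg
    ⟨by linarith [hwL.1], by linarith [hwL.2]⟩))
  by_cases hy : y ∈ Icc L 0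
  · rw [W.eq_coe_of_mem hy, ← EReal.coe_sub, EReal.coe_le_coe_iff]
    rcases le_total y w with hyw | hwy
    · have := W.fitness_sub_le (ξ := s) (x := y + v) (x' := w + v) (by linarith)
      rw [abs_of_nonneg (by linarith)]
      linarith
    · have : fitness γ μ h s (y + v) ≤ fitness γ μ h s (w + v) := by
        rcases hw.1.eq_or_lt with heq | hlt
        · rw [← heq, sub_add_cancel, hx₀]
          exact hle _
        · exact W.concaveOn.right_le_of_le_left'' hx₀L hy hlt hwy
            (by simp only [sub_add_cancel, hx₀]; exact hle _)
      linarith [abs_nonneg (w - y)]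
  · rw [W.isTravelingWave.eq_bot hy, EReal.bot_sub]
    exact bot_le

/-- For `v ≤ s` the penalty is active left of `0`, so `φ x = v (1 - μ) + μ x + φ (x + v)` on
`[x₀, 0]`; unrolling this over `n` jumps gives the formula. -/
lemma fitness_eq_jumpGain (W : WaveSupConv γ μ v L s g h) (hvs : v ≤ s) {x₀ : ℝ}
    (hle : ∀ x, fitness γ μ h s x ≤ γ) (hx₀ : fitness γ μ h s x₀ = γ) (n : ℕ) {x : ℝ}
    (h₁ : x₀ ≤ x) (h₂ : -(n * v) ≤ x) (h₃ : x < v - n * v) :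
    fitness γ μ h s x = v * jumpGain μ n + (v - n * v - x) * (1 - (n + 1) * μ) := by
  have hv := W.v_pos
  have hveq : v = 1 - γ - μ * (s - v) := by
    simpa [max_eq_left (sub_nonneg.2 hvs)] using W.v_eq
  induction n generalizing x with
  | zero =>
    simp only [Nat.cast_zero, zero_mul, neg_zero, sub_zero] at h₂ h₃ ⊢
    rw [fitness, W.h_of_nonneg h₂, max_eq_left (by linarith)]
    unfold jumpGain
    linear_combination -hveq
  | succ n ih =>
    push_cast at h₂ h₃
    have hrec := ih (x := x + v) (by linarith) (by linarith) (by linarith)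
    have hn : (0 : ℝ) ≤ n * v := by positivity
    rw [fitness, W.h_eq_fitness hle hx₀ ⟨by linarith, by linarith⟩, hrec,
      max_eq_left (by linarith)]
    unfold jumpGain
    push_cast
    linear_combination -hveq

lemma le_gammaC (W : WaveSupConv γ μ v L s g h) (hvs : v ≤ s) : γ ≤ gammaC μ := by
  obtain ⟨hle, x₀, hx₀⟩ := W.exists_fitness_eq_gamma
  have hv := W.v_pos
  have hx₀v : x₀ < v := by
    by_contra! hx
    linarith [W.fitness_nonpos (x := x₀) fun hm => hx.not_gt hm.2, W.gamma_pos]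
  obtain ⟨n, hn₁, hn₂⟩ := exists_nat_neg_mul_le_lt hv hx₀v
  have hγ := W.fitness_eq_jumpGain hvs hle hx₀ n le_rfl hn₁ hn₂
  rw [hx₀] at hγ
  have hK : jumpGain μ n ≤ jumpGain μ (kFl μ) := by exact_mod_cast jumpGain_le_kFl W.mu_pos n
  have hK₁ : jumpGain μ (n + 1) ≤ jumpGain μ (kFl μ) := by
    exact_mod_cast jumpGain_le_kFl W.mu_pos (n + 1)
  have hstep : jumpGain μ (n + 1) = jumpGain μ n + (1 - (n + 1) * μ) := by
    unfold jumpGain; ring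
  have hγK : γ ≤ v * jumpGain μ (kFl μ) := by
    rcases le_total 0 (1 - (n + 1) * μ) with hc | hc
    · nlinarith [mul_nonneg (by linarith : (0 : ℝ) ≤ x₀ + n * v) hc,
        mul_le_mul_of_nonneg_left hK₁ hv.le]
    · nlinarith [mul_nonpos_of_nonneg_of_nonpos (by linarith : (0 : ℝ) ≤ v - n * v - x₀) hc,
        mul_le_mul_of_nonneg_left hK hv.le]
  have hvγ : v ≤ 1 - γ := by
    have := mul_nonneg W.mu_pos.le (le_max_right (s - v) 0)
    linarith [W.v_eq]
  have hpos : 0 < jumpGain μ (kFl μ) := by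
    by_contra! hq
    nlinarith [W.gamma_pos]
  rw [le_gammaC_iff W.mu_pos]
  nlinarith

lemma v_eq_of_lt (W : WaveSupConv γ μ v L s g h) (hsv : s < v) : v = 1 - γ := by
  simpa [max_eq_right (by linarith : s - v ≤ 0)] using W.v_eq

/-- Induction on the number of jumps of length `v` from `w` into `[0, ∞)`, where `h w = -w`;
for `s < v` no penalty is paid on the way. -/
lemma h_eq_neg_of_le (W : WaveSupConv γ μ v L s g h) (hsv : s < v) {w : ℝ} (hw : s ≤ w) :
    h w = -w := by
  have hv := W.v_pos
  suffices ∀ n : ℕ, ∀ w, s ≤ w → -(n * v) ≤ w → h w = -w by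
    obtain ⟨n, hn⟩ := exists_nat_ge (-w / v)
    exact this n w hw (by rw [div_le_iff₀ hv] at hn; linarith)
  intro n
  induction n with
  | zero => exact fun w _ hw₀ => W.h_of_nonneg (by simpa using hw₀)
  | succ n ih =>
    intro w hsw hnw
    rcases le_total 0 w with hw₀ | hw₀
    · exact W.h_of_nonneg hw₀
    have hfit : fitness γ μ h s (w + v) = -w := by
      rw [fitness, ih (w + v) (by linarith) (by push_cast at hnw; linarith),
        max_eq_right (by linarith), W.v_eq_of_lt hsv]
      ring
    have := W.fitness_le_h (w := w) (by rw [hfit]; linarith)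
    rw [hfit] at this
    exact le_antisymm (W.h_le_neg w) this

lemma gammaC_lt (W : WaveSupConv γ μ v L s g h) (hsv : s < v) : gammaC μ < γ := by
  have hv := W.v_pos
  have hnodes : ∀ j : ℕ, (j : ℤ) ≤ kFl μ →
      v - s + v * jumpGain μ j ≤ fitness γ μ h s (s - j * v) := by
    intro j
    induction j with
    | zero =>
      intro _
      simp [fitness, W.h_eq_neg_of_le hsv le_rfl, jumpGain, W.v_eq_of_lt hsv]
    | succ n ih =>
      intro hn
      have hprev := ih (by omega)
      have hq := jumpGain_nonneg W.mu_pos (j := n) (by omega)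
      have hpos : 0 ≤ fitness γ μ h s (s - (n + 1) * v + v) := by
        rw [show s - (n + 1) * v + v = s - n * v by ring]
        nlinarith [mul_nonneg hv.le hq]
      have hh := W.fitness_le_h hpos
      rw [show s - (n + 1) * v + v = s - n * v by ring] at hh
      have hstep : v * jumpGain μ (n + 1) = v * jumpGain μ n + v - μ * ((n + 1) * v) := by
        unfold jumpGain; ring
      push_cast
      rw [fitness, max_eq_left (by rw [sub_sub_cancel]; positivity), sub_sub_cancel,
        ← W.v_eq_of_lt hsv, hstep]
      linarith
  have hK := hnodes (kFl μ).toNat (by simp [kFl_nonneg W.mu_pos])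
  have hcast : (((kFl μ).toNat : ℕ) : ℝ) = (kFl μ : ℝ) := by
    exact_mod_cast Int.toNat_of_nonneg (kFl_nonneg W.mu_pos)
  rw [hcast] at hK
  have := W.exists_fitness_eq_gamma.1 (s - kFl μ * v)
  by_contra! hγ
  rw [le_gammaC_iff W.mu_pos, ← W.v_eq_of_lt hsv] at hγ
  linarith

end WaveSupConv

lemma WaveSupConv.plateauShape (W : WaveSupConv γ μ v L s g h) :
    PlateauShape g (fun y => fitness γ μ h s (y + v)) L (min (s - v) 0) := by
  have hv := W.v_pos
  have heq_neg : ∀ y ∈ Icc (min (s - v) 0) 0, fitness γ μ h s (y + v) = -y := by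
    intro y hy
    rcases le_or_gt v s with hvs | hsv
    · rw [min_eq_right (by linarith)] at hy
      rw [le_antisymm hy.2 hy.1, zero_add, W.fitness_v, neg_zero]
    · rw [min_eq_left (by linarith)] at hy
      rw [fitness, W.h_eq_neg_of_le hsv (by linarith [hy.1]), max_eq_right (by linarith [hy.1]),
        W.v_eq_of_lt hsv]
      ring
  have hp : min (s - v) 0 ∈ Icc L 0 := by
    by_contra hp
    have := W.fitness_neg hp
    rw [heq_neg _ ⟨le_rfl, min_le_right _ _⟩] at this
    linarith [min_le_right (s - v) 0]
  refine ⟨hp.1, hp.2, fun y hy => W.isTravelingWave.eq_bot hy, fun y hy => W.eq_coe_of_mem hy,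
    fun y hy => W.fitness_le_neg hy.2, heq_neg, fun y hy y' hy' hyy' => ?_⟩
  have := W.fitness_add_le (ξ := s) (x := y + v) (x' := y' + v) (by linarith)
    (by linarith [hy'.2, min_le_left (s - v) 0])
  nlinarith [mul_pos W.mu_pos (sub_pos.2 hyy')]

lemma IsTravelingWave.exists_plateauShape (hγ : γ ∈ Ioo 0 1) (hμ : 0 < μ)
    (hg : IsTravelingWave γ μ g v L) :
    ∃ G p, PlateauShape g G L p ∧ 0 < v ∧
      (γ ≤ gammaC μ ∧ p = 0 ∨ gammaC μ < γ ∧ p < 0) := by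
  obtain ⟨h, W⟩ := hg.exists_waveSupConv hγ hμ
  refine ⟨_, _, W.plateauShape, W.v_pos, ?_⟩
  rcases le_or_gt v (sNext γ μ g) with hvs | hsv
  · exact Or.inl ⟨W.le_gammaC hvs, min_eq_right (by linarith)⟩
  · exact Or.inr ⟨W.gammaC_lt hsv, min_lt_iff.2 (Or.inl (by linarith))⟩

end

theorem ancestral_map_iterates_general (γ μ : ℝ) (hγ : γ ∈ Set.Ioo (0 : ℝ) 1)
    (hμ : 0 < μ)
    (g : ℝ → EReal) (v L : ℝ) (hg : IsTravelingWave γ μ g v L)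
    (A Ap : ℝ → ℝ)
    (hA : ∀ x ∈ Set.Icc L 0, IsLeast
      {y : ℝ | ∀ z : ℝ, g z - ((|x + v - z| : ℝ) : EReal) ≤
        g y - ((|x + v - y| : ℝ) : EReal)} (A x))
    (hAp : ∀ x ∈ Set.Icc L 0, IsGreatest
      {y : ℝ | ∀ z : ℝ, g z - ((|x + v - z| : ℝ) : EReal) ≤
        g y - ((|x + v - y| : ℝ) : EReal)} (Ap x)) :
    MonotoneOn A (Set.Icc L 0) ∧ MonotoneOn Ap (Set.Icc L 0) ∧
    ∀ x ∈ Set.Icc L 0,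
      (γ ≤ gammaC μ → ∃ J : ℕ, ∀ j : ℕ, J ≤ j →
        A^[j] x = 0 ∧ Ap^[j] x = 0) ∧
      (gammaC μ < γ → ∃ c₁ : ℝ, 0 < c₁ ∧ ∃ J : ℕ, ∀ j : ℕ, J ≤ j →
        A^[j] x = -c₁ ∧ Ap^[j] x = 0) := by
  obtain ⟨G, p, P, hv, hp⟩ := hg.exists_plateauShape hγ hμ
  refine ⟨P.monotoneOn_of_isLeast hA, P.monotoneOn_of_isGreatest hAp, fun x hx => ?_⟩
  obtain ⟨J₁, hJ₁⟩ := P.exists_iterate_eq_of_isLeast hv hA hx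
  obtain ⟨J₂, hJ₂⟩ := P.exists_iterate_eq_of_isGreatest hv hAp hx
  have hJ : ∀ j, max J₁ J₂ ≤ j → A^[j] x = p ∧ Ap^[j] x = 0 := fun j hj =>
    ⟨hJ₁ j (le_of_max_le_left hj), hJ₂ j (le_of_max_le_right hj)⟩
  rcases hp with ⟨hγc, rfl⟩ | ⟨hγc, hp⟩
  · exact ⟨fun _ => ⟨_, hJ⟩, fun h => absurd hγc (not_le.2 h)⟩
  · refine ⟨fun h => absurd h (not_le.2 hγc), fun _ => ⟨-p, neg_pos.2 hp, max J₁ J₂, ?_⟩⟩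
    simpa only [neg_neg] using hJ

/-- the ancestral maps `A` and `A⁺` are non-decreasing on
`[L,0]`; if `γ ≤ γ_c` their iterates reach `0` after finitely many steps,
while if `γ > γ_c` there is `c₁ > 0` with `A^j(x) = −c₁` and `(A⁺)^j(x) = 0`
for all large `j`. -/
theorem ancestral_map_iterates (γ μ : ℝ) (hγ : γ ∈ Set.Ioo (0 : ℝ) 1)
    (hμ : 0 < μ) (hμ1 : μ ≠ 1)
    (g : ℝ → EReal) (v L : ℝ) (hg : IsTravelingWave γ μ g v L)
    (A Ap : ℝ → ℝ)
    (hA : ∀ x ∈ Set.Icc L 0, IsLeast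
      {y : ℝ | ∀ z : ℝ, g z - ((|x + v - z| : ℝ) : EReal) ≤
        g y - ((|x + v - y| : ℝ) : EReal)} (A x))
    (hAp : ∀ x ∈ Set.Icc L 0, IsGreatest
      {y : ℝ | ∀ z : ℝ, g z - ((|x + v - z| : ℝ) : EReal) ≤
        g y - ((|x + v - y| : ℝ) : EReal)} (Ap x)) :
    MonotoneOn A (Set.Icc L 0) ∧ MonotoneOn Ap (Set.Icc L 0) ∧
    ∀ x ∈ Set.Icc L 0,
      (γ ≤ gammaC μ → ∃ J : ℕ, ∀ j : ℕ, J ≤ j →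
        A^[j] x = 0 ∧ Ap^[j] x = 0) ∧
      (gammaC μ < γ → ∃ c₁ : ℝ, 0 < c₁ ∧ ∃ J : ℕ, ∀ j : ℕ, J ≤ j →
        A^[j] x = -c₁ ∧ Ap^[j] x = 0) :=
  ancestral_map_iterates_general γ μ hγ hμ g v L hg A Ap hA hAp
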